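/- Let M and S be the (N−1)×(N−1) mass and stiffness matrices with M_{mn} = ∫ψ_{n+1}ψ_{m+1} and S_{mn} = ∫φ_n'φ_m'. Then for 1 ≤ m ≤ N−3 and all 1 ≤ n ≤ N−1, (MS)_{mn} = δ_{mn}; that is, the first N−3 rows of MS coincide with those of the identity matrix. -/

import Mathlib

/-! Write `aₘ = 1 / √(2(2m+1))`, `cₘ = √((2m+1)/2)` and `eₘ = L_{m+1} - L_{m-1}`, so that
`ψ_{m+1} = aₘ eₘ`, `φₙ' = cₙ Lₙ'` and `aₖ cₖ = 1/2`; hence, with `⟨·,·⟩` the inner product of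
`L²(-1, 1)`, `(MS)_{mn} = (aₘ cₙ / 2) ∑ₖ ⟨eₖ, eₘ⟩ ⟨Lₙ', Lₖ'⟩`.
Rodrigues' formula gives `eₘ = c · D^{m-1} (X² - 1)ᵐ`, so `eₘ(±1) = 0` and `eₘ' = (2m+1) Lₘ`.
By orthogonality of the `L_p`, `⟨eₖ, eₘ⟩ ≠ 0` only for `k ∈ {m-2, m, m+2}`, and all three lie in
the summation range since `m ≤ N - 3`. Using `eₘ' = (2m+1) Lₘ` at `m ± 1`, the sum collapses to
`-2 ⟨Lₙ', eₘ⟩`, which is `2 ⟨Lₙ, eₘ'⟩ = 4 δₘₙ` after integrating by parts.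
-/

open Polynomial

/-- The Legendre polynomial of degree `n` (Rodrigues formula). -/
noncomputable def legendre (n : ℕ) : Polynomial ℝ :=
  C ((1 : ℝ) / (2 ^ n * n.factorial)) * derivative^[n] ((X ^ 2 - 1) ^ n)

/-- `ψ_{m+1}(ξ) = (1/√(2(2m+1))) (L_{m+1}(ξ) − L_{m−1}(ξ))`. -/
noncomputable def psiF (m : ℕ) (x : ℝ) : ℝ :=
  (Real.sqrt (2 * (2 * (m : ℝ) + 1)))⁻¹ *
    ((legendre (m + 1)).eval x - (legendre (m - 1)).eval x)

/-- The normalized Legendre function `φ_m(ξ) = √((2m+1)/2) L_m(ξ)`. -/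
noncomputable def phiF (m : ℕ) (x : ℝ) : ℝ :=
  Real.sqrt ((2 * (m : ℝ) + 1) / 2) * (legendre m).eval x

/-- The `(N−1)×(N−1)` mass matrix `M_{mn} = ∫ ψ_{n+1} ψ_{m+1}`,
with index `i : Fin (N−1)` corresponding to `m = i + 1`. -/
noncomputable def massMatrix (N : ℕ) : Matrix (Fin (N - 1)) (Fin (N - 1)) ℝ :=
  Matrix.of fun i j => ∫ x in (-1 : ℝ)..1, psiF ((j : ℕ) + 1) x * psiF ((i : ℕ) + 1) x

/-- The `(N−1)×(N−1)` stiffness matrix `S_{mn} = ∫ φ_n' φ_m'`. -/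
noncomputable def stiffMatrix (N : ℕ) : Matrix (Fin (N - 1)) (Fin (N - 1)) ℝ :=
  Matrix.of fun i j =>
    ∫ x in (-1 : ℝ)..1, deriv (phiF ((j : ℕ) + 1)) x * deriv (phiF ((i : ℕ) + 1)) x

open intervalIntegral

noncomputable def l2Inner (p q : ℝ[X]) : ℝ :=
  ∫ x in (-1 : ℝ)..1, p.eval x * q.eval x

theorem l2Inner_comm (p q : ℝ[X]) : l2Inner p q = l2Inner q p := by
  simp only [l2Inner, mul_comm]

theorem l2Inner_sub_left (p q r : ℝ[X]) : l2Inner (p - q) r = l2Inner p r - l2Inner q r := by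
  simp only [l2Inner, eval_sub, sub_mul]
  exact integral_sub ((p.continuous.mul r.continuous).intervalIntegrable _ _)
    ((q.continuous.mul r.continuous).intervalIntegrable _ _)

theorem l2Inner_sub_right (p q r : ℝ[X]) : l2Inner p (q - r) = l2Inner p q - l2Inner p r := by
  rw [l2Inner_comm, l2Inner_sub_left, l2Inner_comm q, l2Inner_comm r]

theorem l2Inner_C_mul_right (p q : ℝ[X]) (c : ℝ) : l2Inner p (C c * q) = c * l2Inner p q := by
  simp only [l2Inner, eval_mul, eval_C, mul_left_comm _ c, integral_const_mul]

theorem l2Inner_derivative_right (p q : ℝ[X]) :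
    l2Inner p (derivative q)
      = p.eval 1 * q.eval 1 - p.eval (-1) * q.eval (-1) - l2Inner (derivative p) q :=
  integral_mul_deriv_eq_deriv_mul (fun x _ => p.hasDerivAt x) (fun x _ => q.hasDerivAt x)
    ((derivative p).continuous.intervalIntegrable _ _)
    ((derivative q).continuous.intervalIntegrable _ _)

theorem monic_X_sq_sub_one : (X ^ 2 - 1 : ℝ[X]).Monic := by
  simpa using monic_X_pow_sub_C (1 : ℝ) two_ne_zero

theorem natDegree_X_sq_sub_one_pow (n : ℕ) : ((X ^ 2 - 1 : ℝ[X]) ^ n).natDegree = 2 * n := by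
  rw [monic_X_sq_sub_one.natDegree_pow, show (X ^ 2 - 1 : ℝ[X]).natDegree = 2 by
      simpa using natDegree_X_pow_sub_C (n := 2) (r := (1 : ℝ)), mul_comm]

theorem natDegree_legendre_le (n : ℕ) : (legendre n).natDegree ≤ n :=
  (natDegree_C_mul_le _ _).trans <| (natDegree_iterate_derivative _ _).trans <| by
    rw [natDegree_X_sq_sub_one_pow]; omega

theorem legendre_zero : legendre 0 = 1 := by simp [legendre]

theorem legendre_one : legendre 1 = X := by
  simp only [legendre, Function.iterate_one, pow_one, derivative_sub, derivative_X_pow,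
    derivative_one, sub_zero, ← mul_assoc, ← C_mul]
  norm_num

theorem eval_iterate_derivative_X_sq_sub_one_pow_eq_zero {n j : ℕ} (hj : j < n) {x : ℝ}
    (hx : x ^ 2 = 1) : (derivative^[j] ((X ^ 2 - 1 : ℝ[X]) ^ n)).eval x = 0 := by
  obtain ⟨r, hr⟩ := pow_sub_dvd_iterate_derivative_pow (X ^ 2 - 1 : ℝ[X]) n j
  rw [hr, eval_mul, eval_pow, eval_sub, eval_pow, eval_X, eval_one, hx, sub_self,
    zero_pow (by omega), zero_mul]

/-- The boundary terms vanish because `±1` are roots of `(X² - 1)ⁿ` of multiplicity `n`. -/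
theorem l2Inner_iterate_derivative_X_sq_sub_one_pow (n : ℕ) (q : ℝ[X]) {k : ℕ}
    (hk : k ≤ n) :
    l2Inner q (derivative^[n] ((X ^ 2 - 1) ^ n))
      = (-1) ^ k * l2Inner (derivative^[k] q) (derivative^[n - k] ((X ^ 2 - 1) ^ n)) := by
  induction k with
  | zero => simp
  | succ k ih =>
    rw [ih (by omega), show n - k = n - (k + 1) + 1 by omega, Function.iterate_succ_apply',
      l2Inner_derivative_right,
      eval_iterate_derivative_X_sq_sub_one_pow_eq_zero (by omega) (by norm_num),
      eval_iterate_derivative_X_sq_sub_one_pow_eq_zero (by omega) (by norm_num),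
      ← Function.iterate_succ_apply' derivative k q]
    ring

theorem l2Inner_legendre_right (q : ℝ[X]) (n : ℕ) :
    l2Inner q (legendre n)
      = (-1) ^ n / (2 ^ n * n.factorial) * l2Inner (derivative^[n] q) ((X ^ 2 - 1) ^ n) := by
  rw [legendre, l2Inner_C_mul_right, l2Inner_iterate_derivative_X_sq_sub_one_pow n q le_rfl,
    Nat.sub_self, Function.iterate_zero_apply]
  ring

theorem l2Inner_legendre_eq_zero {q : ℝ[X]} {n : ℕ} (hq : q.natDegree < n) :
    l2Inner q (legendre n) = 0 := by
  rw [l2Inner_legendre_right, iterate_derivative_eq_zero hq]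
  simp [l2Inner]

theorem mul_integral_X_sq_sub_one_pow_succ (n : ℕ) :
    (2 * (n : ℝ) + 3) * ∫ x in (-1 : ℝ)..1, (x ^ 2 - 1) ^ (n + 1)
      = -((2 * n + 2) * ∫ x in (-1 : ℝ)..1, (x ^ 2 - 1) ^ n) := by
  have hparts := l2Inner_derivative_right X ((X ^ 2 - 1 : ℝ[X]) ^ (n + 1))
  have hint (k : ℕ) :
      IntervalIntegrable (fun x : ℝ => (x ^ 2 - 1) ^ k) MeasureTheory.volume (-1) 1 :=
    (by fun_prop : Continuous fun x : ℝ => (x ^ 2 - 1) ^ k).intervalIntegrable _ _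
  have hderiv (x : ℝ) : X.eval x * (derivative ((X ^ 2 - 1 : ℝ[X]) ^ (n + 1))).eval x
      = (2 * n + 2) * (x ^ 2 - 1) ^ (n + 1) + (2 * n + 2) * (x ^ 2 - 1) ^ n := by
    simp only [derivative_pow, derivative_sub, derivative_one, derivative_X,
      eval_mul, eval_pow, eval_sub, eval_X, eval_one, eval_C, sub_zero]
    push_cast
    ring
  rw [l2Inner, l2Inner, integral_congr (fun x _ => hderiv x)] at hparts
  simp only [integral_add ((hint _).const_mul _) ((hint _).const_mul _), integral_const_mul,
    derivative_X, eval_one, one_mul, eval_X, eval_pow, eval_sub] at hparts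
  norm_num at hparts
  linarith

theorem factorial_mul_integral_X_sq_sub_one_pow (n : ℕ) :
    ((2 * n + 1).factorial : ℝ) * ∫ x in (-1 : ℝ)..1, (x ^ 2 - 1) ^ n
      = (-1) ^ n * 2 ^ (2 * n + 1) * (n.factorial : ℝ) ^ 2 := by
  induction n with
  | zero => norm_num
  | succ n ih =>
    have hfac : ((2 * (n + 1) + 1).factorial : ℝ)
        = (2 * n + 3) * (2 * n + 2) * (2 * n + 1).factorial := by
      rw [show 2 * (n + 1) + 1 = 2 * n + 1 + 1 + 1 by ring, Nat.factorial_succ, Nat.factorial_succ]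
      push_cast
      ring
    rw [hfac, Nat.factorial_succ n]
    push_cast
    linear_combination ((2 * n + 1).factorial : ℝ) * (2 * n + 2)
      * mul_integral_X_sq_sub_one_pow_succ n - 4 * (n + 1) ^ 2 * ih

theorem iterate_derivative_X_sq_sub_one_pow_self (n : ℕ) :
    derivative^[2 * n] ((X ^ 2 - 1 : ℝ[X]) ^ n) = C ((2 * n).factorial : ℝ) := by
  have hdeg : (derivative^[2 * n] ((X ^ 2 - 1 : ℝ[X]) ^ n)).natDegree = 0 := by
    have := natDegree_iterate_derivative ((X ^ 2 - 1 : ℝ[X]) ^ n) (2 * n)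
    rw [natDegree_X_sq_sub_one_pow] at this
    omega
  have hlead : ((X ^ 2 - 1 : ℝ[X]) ^ n).coeff (2 * n) = 1 := by
    rw [← natDegree_X_sq_sub_one_pow n]
    exact monic_X_sq_sub_one.pow n
  rw [eq_C_of_natDegree_eq_zero hdeg, coeff_iterate_derivative, zero_add, hlead,
    Nat.descFactorial_self, nsmul_eq_mul, mul_one]

theorem l2Inner_legendre_self (n : ℕ) : l2Inner (legendre n) (legendre n) = 2 / (2 * n + 1) := by
  have hderiv : derivative^[n] (legendre n)
      = C ((2 * n).factorial / (2 ^ n * n.factorial : ℝ)) := by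
    rw [legendre, iterate_derivative_C_mul, ← Function.iterate_add_apply, ← two_mul,
      iterate_derivative_X_sq_sub_one_pow_self, ← C_mul, one_div, inv_mul_eq_div]
  have hint := factorial_mul_integral_X_sq_sub_one_pow n
  have hfac : ((2 * n + 1).factorial : ℝ) = (2 * n + 1) * (2 * n).factorial := by
    rw [Nat.factorial_succ]; push_cast; ring
  have hsign : ((-1 : ℝ) ^ n) ^ 2 = 1 := by rw [← pow_mul, mul_comm, pow_mul]; norm_num
  rw [l2Inner_legendre_right, hderiv]
  simp only [l2Inner, eval_C, eval_pow, eval_sub, eval_X, eval_one, integral_const_mul]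
  rw [hfac] at hint
  field_simp
  linear_combination (-1 : ℝ) ^ n * hint + 2 ^ (2 * n + 1) * (n.factorial : ℝ) ^ 2 * hsign

theorem l2Inner_legendre_legendre (m n : ℕ) :
    l2Inner (legendre m) (legendre n) = if m = n then 2 / (2 * (n : ℝ) + 1) else 0 := by
  split_ifs with h
  · exact h ▸ l2Inner_legendre_self m
  · rcases Nat.lt_or_gt_of_ne h with h | h
    · exact l2Inner_legendre_eq_zero ((natDegree_legendre_le m).trans_lt h)
    · rw [l2Inner_comm]
      exact l2Inner_legendre_eq_zero ((natDegree_legendre_le n).trans_lt h)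

theorem iterate_derivative_two_X_sq_sub_one_pow (n : ℕ) :
    derivative^[2] ((X ^ 2 - 1 : ℝ[X]) ^ (n + 2))
      = C (2 * (n + 2) * (2 * n + 3) : ℝ) * (X ^ 2 - 1) ^ (n + 1)
        + C (4 * (n + 2) * (n + 1) : ℝ) * (X ^ 2 - 1) ^ n := by
  simp only [Function.iterate_succ, Function.iterate_zero, Function.comp_apply, id_eq,
    derivative_pow, derivative_mul, derivative_sub, derivative_one, derivative_natCast,
    derivative_X, sub_zero, zero_mul, zero_add, C_eq_natCast]
  simp only [map_mul, map_add, map_ofNat, map_natCast, map_one]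
  push_cast
  ring

theorem legendre_add_two_sub_legendre (m : ℕ) :
    legendre (m + 2) - legendre m
      = C ((2 * m + 3) / (2 ^ (m + 1) * (m + 1).factorial) : ℝ)
          * derivative^[m] ((X ^ 2 - 1) ^ (m + 1)) := by
  have hcoeff₁ : 1 / (2 ^ (m + 2) * (m + 2).factorial) * (2 * (m + 2) * (2 * m + 3))
      = ((2 * m + 3) / (2 ^ (m + 1) * (m + 1).factorial) : ℝ) := by
    rw [Nat.factorial_succ (m + 1)]
    push_cast
    field_simp
    ring
  have hcoeff₂ : 1 / (2 ^ (m + 2) * (m + 2).factorial) * (4 * (m + 2) * (m + 1))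
      = (1 / (2 ^ m * m.factorial) : ℝ) := by
    rw [Nat.factorial_succ (m + 1), Nat.factorial_succ m]
    push_cast
    field_simp
    ring
  rw [legendre, legendre, Function.iterate_add_apply, iterate_derivative_two_X_sq_sub_one_pow,
    iterate_map_add, iterate_derivative_C_mul, iterate_derivative_C_mul, mul_add,
    ← mul_assoc, ← mul_assoc, ← C_mul, ← C_mul, hcoeff₁, hcoeff₂, add_sub_cancel_right]

/-- For `m = 0` the truncated subtraction makes this `L₁ - L₀`. -/
noncomputable def legendreDiff (m : ℕ) : ℝ[X] := legendre (m + 1) - legendre (m - 1)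

theorem legendreDiff_succ (m : ℕ) :
    legendreDiff (m + 1) = legendre (m + 2) - legendre m := rfl

theorem eval_legendreDiff_eq_zero {m : ℕ} (hm : m ≠ 0) {x : ℝ} (hx : x ^ 2 = 1) :
    (legendreDiff m).eval x = 0 := by
  obtain ⟨m, rfl⟩ := Nat.exists_eq_succ_of_ne_zero hm
  rw [legendreDiff_succ, legendre_add_two_sub_legendre, eval_mul,
    eval_iterate_derivative_X_sq_sub_one_pow_eq_zero (Nat.lt_succ_self m) hx, mul_zero]

theorem derivative_legendreDiff (m : ℕ) :
    derivative (legendreDiff m) = C (2 * (m : ℝ) + 1) * legendre m := by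
  cases m with
  | zero => simp [legendreDiff, legendre_zero, legendre_one]
  | succ m =>
    rw [legendreDiff_succ, legendre_add_two_sub_legendre, derivative_C_mul,
      ← Function.iterate_succ_apply' derivative, legendre, ← mul_assoc, ← C_mul]
    congr 2
    rw [Nat.factorial_succ m]
    push_cast
    field_simp
    ring

open Finset in
theorem sum_range_ite_add_eq {M : Type*} [AddCommMonoid M] (K c q : ℕ) (f : ℕ → M) :
    ∑ k ∈ range K, (if k + c = q then f k else 0)
      = if c ≤ q ∧ q < K + c then f (q - c) else 0 := by
  split_ifs with h
  · rw [sum_eq_single (q - c) (fun k _ hk => if_neg (by omega))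
      (fun hq => absurd (mem_range.2 (by omega)) hq), if_pos (by omega)]
  · exact sum_eq_zero fun k hk => if_neg (by rw [mem_range] at hk; omega)

theorem l2Inner_legendre_legendreDiff (p : ℕ) {m : ℕ} (hm : m ≠ 0) :
    l2Inner (legendre p) (legendreDiff m)
      = (if p = m + 1 then 2 / (2 * (m : ℝ) + 3) else 0)
        - (if p + 1 = m then 2 / (2 * ((m - 1 : ℕ) : ℝ) + 1) else 0) := by
  rw [legendreDiff, l2Inner_sub_right, l2Inner_legendre_legendre, l2Inner_legendre_legendre]
  congr 1
  · push_cast; ring_nf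
  · exact if_congr (by omega) rfl rfl

open Finset in
/-- Only `k + 1 ∈ {m - 2, m, m + 2}` contribute; for `m ≤ 2` the truncated `D (m - 2) = D 0`
stands in for the missing term. -/
theorem sum_l2Inner_legendreDiff_mul {m K : ℕ} (hm : m ≠ 0) (hK : m + 2 ≤ K) (D : ℕ → ℝ)
    (hD : D 0 = 0) :
    ∑ k ∈ range K, l2Inner (legendreDiff (k + 1)) (legendreDiff m) * D (k + 1)
      = 2 / (2 * (m : ℝ) + 3) * (D m - D (m + 2))
        + 2 / (2 * ((m - 1 : ℕ) : ℝ) + 1) * (D m - D (m - 2)) := by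
  simp only [legendreDiff_succ, l2Inner_sub_left, l2Inner_legendre_legendreDiff _ hm,
    show ∀ k, k + 2 + 1 = k + 3 from fun _ => rfl, sub_mul, ite_mul, zero_mul, sum_sub_distrib,
    sum_range_ite_add_eq, sum_ite_eq', mem_range]
  rw [if_pos (show 2 ≤ m + 1 ∧ m + 1 < K + 2 by omega), if_pos (show m + 1 < K by omega),
    if_pos (show 1 ≤ m ∧ m < K + 1 by omega), show m + 1 - 2 + 1 = m by omega,
    Nat.sub_add_cancel (Nat.one_le_iff_ne_zero.2 hm)]
  have hlow :
      (if 3 ≤ m ∧ m < K + 3 then 2 / (2 * ((m - 1 : ℕ) : ℝ) + 1) * D (m - 3 + 1) else 0)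
        = 2 / (2 * ((m - 1 : ℕ) : ℝ) + 1) * D (m - 2) := by
    split_ifs with h
    · rw [show m - 3 + 1 = m - 2 by omega]
    · rw [show m - 2 = 0 by omega, hD, mul_zero]
  rw [hlow]
  ring

theorem l2Inner_derivative_legendreDiff (p : ℝ[X]) (k : ℕ) :
    l2Inner p (derivative (legendre (k + 1))) - l2Inner p (derivative (legendre (k - 1)))
      = (2 * k + 1) * l2Inner p (legendre k) := by
  rw [← l2Inner_sub_right, ← derivative_sub, ← legendreDiff, derivative_legendreDiff,
    l2Inner_C_mul_right]

theorem l2Inner_derivative_legendre_legendreDiff (n : ℕ) {m : ℕ} (hm : m ≠ 0) :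
    l2Inner (derivative (legendre n)) (legendreDiff m)
      = -((2 * m + 1) * l2Inner (legendre n) (legendre m)) := by
  rw [l2Inner_comm, l2Inner_derivative_right, eval_legendreDiff_eq_zero hm (by norm_num),
    eval_legendreDiff_eq_zero hm (by norm_num), derivative_legendreDiff, l2Inner_comm,
    l2Inner_C_mul_right]
  ring

open Finset in
theorem sum_l2Inner_legendreDiff_mul_l2Inner_derivative {m K : ℕ} (hm : m ≠ 0)
    (hK : m + 2 ≤ K) (n : ℕ) :
    ∑ k ∈ range K, l2Inner (legendreDiff (k + 1)) (legendreDiff m)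
        * l2Inner (derivative (legendre n)) (derivative (legendre (k + 1)))
      = if n = m then 4 else 0 := by
  rw [sum_l2Inner_legendreDiff_mul hm hK (fun k => l2Inner (derivative (legendre n))
    (derivative (legendre k))) (by simp [legendre_zero, l2Inner])]
  have hup := l2Inner_derivative_legendreDiff (derivative (legendre n)) (m + 1)
  have hdown := l2Inner_derivative_legendreDiff (derivative (legendre n)) (m - 1)
  rw [Nat.add_sub_cancel, show m + 1 + 1 = m + 2 from rfl] at hup
  rw [Nat.sub_add_cancel (Nat.one_le_iff_ne_zero.2 hm), show m - 1 - 1 = m - 2 by omega] at hdown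
  have hparts := l2Inner_derivative_legendre_legendreDiff n hm
  rw [legendreDiff, l2Inner_sub_right, l2Inner_legendre_legendre] at hparts
  have hα : 2 / (2 * (m : ℝ) + 3) * (2 * ((m + 1 : ℕ) : ℝ) + 1) = 2 := by
    push_cast
    field_simp
    ring
  have hβ : 2 / (2 * ((m - 1 : ℕ) : ℝ) + 1) * (2 * ((m - 1 : ℕ) : ℝ) + 1) = 2 :=
    div_mul_cancel₀ _ (by positivity)
  have hγ : (2 * (m : ℝ) + 1) * (2 / (2 * m + 1)) = 2 := mul_div_cancel₀ _ (by positivity)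
  split_ifs at hparts ⊢ with h <;> simp only [hγ, mul_zero] at hparts <;>
  linear_combination -(2 / (2 * (m : ℝ) + 3)) * hup + 2 / (2 * ((m - 1 : ℕ) : ℝ) + 1) * hdown
    - l2Inner (derivative (legendre n)) (legendre (m + 1)) * hα
    + l2Inner (derivative (legendre n)) (legendre (m - 1)) * hβ - 2 * hparts

theorem inv_sqrt_two_mul_mul_sqrt_div_two {t : ℝ} (ht : 0 < t) :
    (√(2 * t))⁻¹ * √(t / 2) = 1 / 2 := by
  rw [← Real.sqrt_inv, ← Real.sqrt_mul (by positivity), Real.sqrt_eq_iff_mul_self_eq_of_pos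
    (by norm_num)]
  field_simp

theorem integral_psiF_mul_psiF (p q : ℕ) :
    ∫ x in (-1 : ℝ)..1, psiF p x * psiF q x
      = (√(2 * (2 * (p : ℝ) + 1)))⁻¹ * (√(2 * (2 * (q : ℝ) + 1)))⁻¹
          * l2Inner (legendreDiff p) (legendreDiff q) := by
  simp only [l2Inner, ← integral_const_mul, psiF, legendreDiff, eval_sub]
  congr 1 with x
  ring

theorem integral_deriv_phiF_mul_deriv_phiF (p q : ℕ) :
    ∫ x in (-1 : ℝ)..1, deriv (phiF p) x * deriv (phiF q) x
      = √((2 * (p : ℝ) + 1) / 2) * √((2 * (q : ℝ) + 1) / 2)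
          * l2Inner (derivative (legendre p)) (derivative (legendre q)) := by
  have hderiv (r : ℕ) (x : ℝ) :
      deriv (phiF r) x = √((2 * (r : ℝ) + 1) / 2) * (derivative (legendre r)).eval x :=
    (((legendre r).hasDerivAt x).const_mul _).deriv
  simp only [l2Inner, ← integral_const_mul, hderiv]
  congr 1 with x
  ring

theorem massMatrix_mul_stiffMatrix_apply (N : ℕ) (i j : Fin (N - 1)) :
    (massMatrix N * stiffMatrix N) i j
      = (√(2 * (2 * ((i + 1 : ℕ) : ℝ) + 1)))⁻¹ * √((2 * ((j + 1 : ℕ) : ℝ) + 1) / 2)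
        / 2 * ∑ k ∈ Finset.range (N - 1), l2Inner (legendreDiff (k + 1)) (legendreDiff (i + 1))
            * l2Inner (derivative (legendre (j + 1))) (derivative (legendre (k + 1))) := by
  rw [Matrix.mul_apply, Finset.mul_sum, ← Fin.sum_univ_eq_sum_range]
  refine Finset.sum_congr rfl fun k _ => ?_
  have hk := inv_sqrt_two_mul_mul_sqrt_div_two (t := 2 * ((k + 1 : ℕ) : ℝ) + 1) (by positivity)
  simp only [massMatrix, stiffMatrix, Matrix.of_apply, integral_psiF_mul_psiF,
    integral_deriv_phiF_mul_deriv_phiF]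
  push_cast at hk ⊢
  linear_combination (√(2 * (2 * ((i : ℕ) + 1 : ℝ) + 1)))⁻¹
    * √((2 * ((j : ℕ) + 1 : ℝ) + 1) / 2)
    * l2Inner (legendreDiff (k + 1)) (legendreDiff (i + 1))
    * l2Inner (derivative (legendre (j + 1))) (derivative (legendre (k + 1))) * hk

theorem mass_stiff_first_rows_general (N : ℕ) (i j : Fin (N - 1))
    (hi : (i : ℕ) + 1 ≤ N - 3) :
    (massMatrix N * stiffMatrix N) i j = if i = j then 1 else 0 := by
  rw [massMatrix_mul_stiffMatrix_apply, sum_l2Inner_legendreDiff_mul_l2Inner_derivative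
    (Nat.succ_ne_zero _) (by omega)]
  by_cases h : i = j
  · subst h
    have hnorm :=
      inv_sqrt_two_mul_mul_sqrt_div_two (t := 2 * ((i + 1 : ℕ) : ℝ) + 1) (by positivity)
    rw [if_pos rfl, if_pos rfl]
    linear_combination 2 * hnorm
  · rw [if_neg (fun h' => h (Fin.ext (Nat.succ_injective h'.symm))), if_neg h, mul_zero]

/-- The first `N−3` rows of `MS` coincide with those of the identity:
`(MS)_{mn} = δ_{mn}` for `1 ≤ m ≤ N−3` and all `1 ≤ n ≤ N−1`. -/
theorem mass_stiff_first_rows (N : ℕ) (hN : 4 ≤ N) (i j : Fin (N - 1))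
    (hi : (i : ℕ) + 1 ≤ N - 3) :
    (massMatrix N * stiffMatrix N) i j = if i = j then 1 else 0 :=
  mass_stiff_first_rows_general N i j hi
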